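/- Let (V, Q) be an FBAS with top tier T. Then every minimal blocking set B of (V, Q) satisfies B ⊆ T. -/

import Mathlib

open Finset

variable {α : Type*} [DecidableEq α]

/-- `U` is a quorum of the FBAS `(V, Q)`: a nonempty subset of `V` containing,
for every member `v`, some slice `q ∈ Q v` with `q ⊆ U`. -/
def IsQuorum (V : Finset α) (Q : α → Finset (Finset α)) (U : Finset α) : Prop :=
  U ⊆ V ∧ U.Nonempty ∧ ∀ v ∈ U, ∃ q ∈ Q v, q ⊆ U

/-- A minimal quorum: a quorum none of whose proper subsets is a quorum. -/
def IsMinimalQuorum (V : Finset α) (Q : α → Finset (Finset α)) (U : Finset α) : Prop :=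
  IsQuorum V Q U ∧ ∀ U' ⊂ U, ¬IsQuorum V Q U'

/-- A blocking set: a subset of `V` intersecting every quorum of `(V, Q)`. -/
def IsBlocking (V : Finset α) (Q : α → Finset (Finset α)) (B : Finset α) : Prop :=
  B ⊆ V ∧ ∀ U, IsQuorum V Q U → (B ∩ U).Nonempty

/-- A minimal blocking set: a blocking set none of whose proper subsets is blocking. -/
def IsMinimalBlocking (V : Finset α) (Q : α → Finset (Finset α)) (B : Finset α) : Prop :=
  IsBlocking V Q B ∧ ∀ B' ⊂ B, ¬IsBlocking V Q B'

/-- A splitting set: a subset of `V` containing the intersection of two distinct quorums. -/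
def IsSplitting (V : Finset α) (Q : α → Finset (Finset α)) (S : Finset α) : Prop :=
  S ⊆ V ∧ ∃ U₁ U₂, IsQuorum V Q U₁ ∧ IsQuorum V Q U₂ ∧ U₁ ≠ U₂ ∧ U₁ ∩ U₂ ⊆ S

/-- A minimal splitting set: a splitting set none of whose proper subsets is splitting. -/
def IsMinimalSplitting (V : Finset α) (Q : α → Finset (Finset α)) (S : Finset α) : Prop :=
  IsSplitting V Q S ∧ ∀ S' ⊂ S, ¬IsSplitting V Q S'

/-- Well-formedness of an FBAS `(V, Q)`: every slice of every node `v ∈ V`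
contains `v` and is a subset of `V`. -/
def WellFormed (V : Finset α) (Q : α → Finset (Finset α)) : Prop :=
  ∀ v ∈ V, ∀ q ∈ Q v, v ∈ q ∧ q ⊆ V

/-- `T` is the top tier of `(V, Q)`: the union of all minimal quorums. -/
def IsTopTier (V : Finset α) (Q : α → Finset (Finset α)) (T : Finset α) : Prop :=
  ∀ v, v ∈ T ↔ ∃ U, IsMinimalQuorum V Q U ∧ v ∈ U

/-- `(V, Q)` enjoys quorum intersection: any two quorums share a node. -/
def QuorumIntersection (V : Finset α) (Q : α → Finset (Finset α)) : Prop :=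
  ∀ U₁ U₂, IsQuorum V Q U₁ → IsQuorum V Q U₂ → (U₁ ∩ U₂).Nonempty

/-
Every quorum contains a minimal quorum, and minimal quorums lie in the top tier `T`. Hence a
blocking set `B` still meets every quorum after discarding its nodes outside `T`, i.e. `B ∩ T` is
blocking; minimality of `B` then forces `B ∩ T = B`.
-/

section FBAS

variable {V : Finset α} {Q : α → Finset (Finset α)}

omit [DecidableEq α] in
theorem isMinimalQuorum_iff_minimal {U : Finset α} :
    IsMinimalQuorum V Q U ↔ Minimal (IsQuorum V Q) U :=
  minimal_iff_forall_lt.symm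

omit [DecidableEq α] in
theorem IsQuorum.exists_isMinimalQuorum_subset {U : Finset α} (hU : IsQuorum V Q U) :
    ∃ U' ⊆ U, IsMinimalQuorum V Q U' := by
  obtain ⟨U', hU'U, hU'⟩ := exists_minimal_le_of_wellFoundedLT (IsQuorum V Q) U hU
  exact ⟨U', hU'U, isMinimalQuorum_iff_minimal.mpr hU'⟩

theorem isBlocking_of_forall_isMinimalQuorum {B : Finset α} (hBV : B ⊆ V)
    (hB : ∀ U, IsMinimalQuorum V Q U → (B ∩ U).Nonempty) : IsBlocking V Q B := by
  refine ⟨hBV, fun U hU ↦ ?_⟩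
  obtain ⟨U', hU'U, hU'⟩ := hU.exists_isMinimalQuorum_subset
  exact (hB U' hU').mono (inter_subset_inter_left hU'U)

omit [DecidableEq α] in
theorem IsTopTier.subset_of_isMinimalQuorum {T U : Finset α} (hT : IsTopTier V Q T)
    (hU : IsMinimalQuorum V Q U) : U ⊆ T :=
  fun _ hv ↦ (hT _).mpr ⟨U, hU, hv⟩

theorem IsBlocking.inter_topTier {B T : Finset α} (hB : IsBlocking V Q B)
    (hT : IsTopTier V Q T) : IsBlocking V Q (B ∩ T) := by
  refine isBlocking_of_forall_isMinimalQuorum (inter_subset_left.trans hB.1) fun U hU ↦ ?_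
  have hUT : U ⊆ T := hT.subset_of_isMinimalQuorum hU
  have hBU : (B ∩ T) ∩ U = B ∩ U := by
    rw [inter_assoc, inter_eq_right.mpr hUT]
  exact hBU ▸ hB.2 U hU.1

theorem IsMinimalBlocking.eq_of_isBlocking_of_subset {B B' : Finset α}
    (hB : IsMinimalBlocking V Q B) (hB' : IsBlocking V Q B') (hB'B : B' ⊆ B) : B' = B :=
  of_not_not fun hne ↦ hB.2 B' (ssubset_of_subset_of_ne hB'B hne) hB'

end FBAS

theorem minimal_blocking_subset_top_tier_general
    (V : Finset α) (Q : α → Finset (Finset α))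
    (T : Finset α) (hT : IsTopTier V Q T)
    (B : Finset α) (hB : IsMinimalBlocking V Q B) :
    B ⊆ T :=
  inter_eq_left.mp (hB.eq_of_isBlocking_of_subset (hB.1.inter_topTier hT) inter_subset_left)

/-- every minimal blocking set is contained in the top tier. -/
theorem minimal_blocking_subset_top_tier
    (V : Finset α) (Q : α → Finset (Finset α)) (hwf : WellFormed V Q)
    (T : Finset α) (hT : IsTopTier V Q T)
    (B : Finset α) (hB : IsMinimalBlocking V Q B) :
    B ⊆ T :=
  minimal_blocking_subset_top_tier_general V Q T hT B hB
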